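/- Let k > 0 and β ∈ (0, π/2). Define φ(z) = z cos β + i · sqrtP(z² − k²) · sin β, γ⁺ = { w cos β + i√(w² − k²) sin β : w ∈ (k, ∞) }, γ⁻ = { w cos β − i√(w² − k²) sin β : w ∈ (k, ∞) }, and D⁻ = { z + t : z ∈ γ⁻, t ∈ (0, ∞) }. Then for every w ∈ γ⁺ and every z ∈ D⁻ one has φ(z) ≠ w. -/
import Mathlib


open MeasureTheory

/-- The branch of the complex square root with `θ ∈ [−π, π)`. -/
noncomputable def sqrtP (z : ℂ) : ℂ :=
  if z.im = 0 ∧ z.re < 0 then -(z ^ (1/2 : ℂ)) else z ^ (1/2 : ℂ)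

/-- The Cagniard–de Hoop mapping `φ(z) = z cos β + i sqrtP(z² − k²) sin β`. -/
noncomputable def phiCdH (k β : ℝ) (z : ℂ) : ℂ :=
  z * (Real.cos β : ℂ) + Complex.I * sqrtP (z ^ 2 - (k : ℂ) ^ 2) * (Real.sin β : ℂ)

/-- `γ⁺ = { w cos β + i√(w²−k²) sin β : w ∈ (k, ∞) }`. -/
def gammaPlus (k β : ℝ) : Set ℂ :=
  {z | ∃ w : ℝ, k < w ∧
    z = (w * Real.cos β : ℝ) + Complex.I * (Real.sqrt (w ^ 2 - k ^ 2) * Real.sin β : ℝ)}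

/-- `γ⁻ = { w cos β − i√(w²−k²) sin β : w ∈ (k, ∞) }`. -/
def gammaMinus (k β : ℝ) : Set ℂ :=
  {z | ∃ w : ℝ, k < w ∧
    z = (w * Real.cos β : ℝ) - Complex.I * (Real.sqrt (w ^ 2 - k ^ 2) * Real.sin β : ℝ)}

/-- `D⁻ = { z + t : z ∈ γ⁻, t ∈ (0, ∞) }`. -/
def DMinus (k β : ℝ) : Set ℂ :=
  {ζ | ∃ z ∈ gammaMinus k β, ∃ t : ℝ, 0 < t ∧ ζ = z + (t : ℂ)}


lemma sqrtP_sq (z : ℂ) : sqrtP z ^ 2 = z := by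
  have h : (z ^ (1/2 : ℂ)) ^ 2 = z := by
    rcases eq_or_ne z 0 with rfl | hz
    · rw [Complex.zero_cpow (by norm_num)]; ring
    · rw [sq, ← Complex.cpow_add _ _ hz]; norm_num
  unfold sqrtP; split <;> simp [h, neg_sq]

/-- For `k > 0`, `β ∈ (0, π/2)`, every `w ∈ γ⁺` and every `z ∈ D⁻`, `φ(z) ≠ w`. -/
theorem phiCdH_ne_on_gammaPlus (k β : ℝ) (hk : 0 < k)
    (hβ : β ∈ Set.Ioo 0 (Real.pi / 2)) :
    ∀ w ∈ gammaPlus k β, ∀ z ∈ DMinus k β, phiCdH k β z ≠ w := by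
  obtain ⟨hβ0, hβ2⟩ := hβ
  have hsin : 0 < Real.sin β := Real.sin_pos_of_pos_of_lt_pi hβ0
    (lt_trans hβ2 (by linarith [Real.pi_pos]))
  have hcos : 0 < Real.cos β := Real.cos_pos_of_mem_Ioo
    ⟨by linarith [Real.pi_pos], hβ2⟩
  rintro w ⟨a, ha, rfl⟩ ζ ⟨z0, ⟨u, hu, rfl⟩, t, ht, rfl⟩ h
  set b := Real.sqrt (a ^ 2 - k ^ 2) with hbdef
  set c := Real.sqrt (u ^ 2 - k ^ 2) with hcdef
  have hak : (0:ℝ) < a ^ 2 - k ^ 2 := by nlinarith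
  have huk : (0:ℝ) < u ^ 2 - k ^ 2 := by nlinarith
  have hb2 : b ^ 2 = a ^ 2 - k ^ 2 := Real.sq_sqrt hak.le
  have hb0 : 0 < b := Real.sqrt_pos.mpr hak
  have hc0 : 0 < c := Real.sqrt_pos.mpr huk
  set z : ℂ := ((u * Real.cos β : ℝ) : ℂ)
      - Complex.I * ((c * Real.sin β : ℝ) : ℂ) + ((t : ℝ) : ℂ) with hzdef
  have hzim : z.im = -(c * Real.sin β) := by
    simp [hzdef, -Complex.ofReal_sin, -Complex.ofReal_cos]
  set s : ℂ := sqrtP (z ^ 2 - (k:ℂ) ^ 2) with hsdef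
  have hs : s ^ 2 = z ^ 2 - (k:ℂ) ^ 2 := sqrtP_sq _
  have hh : z * (Real.cos β : ℂ) + Complex.I * s * (Real.sin β : ℂ)
      = (a:ℂ) * (Real.cos β : ℂ) + Complex.I * (b:ℂ) * (Real.sin β : ℂ) := by
    rw [phiCdH] at h
    rw [h]
    simp only [Complex.ofReal_mul]
    ring
  have hbC : ((b:ℝ):ℂ) ^ 2 = ((a:ℝ):ℂ) ^ 2 - ((k:ℝ):ℂ) ^ 2 := by
    exact_mod_cast congrArg (fun x : ℝ => (x : ℂ)) hb2
  have hCS : ((Real.cos β : ℝ):ℂ) ^ 2 + ((Real.sin β : ℝ):ℂ) ^ 2 = 1 := by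
    have h' := congrArg (fun x : ℝ => (x : ℂ)) (Real.sin_sq_add_cos_sq β)
    simp only [Complex.ofReal_add, Complex.ofReal_pow, Complex.ofReal_one] at h'
    linear_combination h'
  have hI : Complex.I ^ 2 = -1 := Complex.I_sq
  have key : (z - (a:ℂ)) * (z - ((a:ℂ) * ((Real.cos β:ℂ) ^ 2 - (Real.sin β:ℂ) ^ 2)
      + 2 * Complex.I * (b:ℂ) * (Real.sin β:ℂ) * (Real.cos β:ℂ))) = 0 := by
    linear_combination (-(Real.sin β:ℂ) ^ 2) * hs + (Real.sin β:ℂ) ^ 2 * hbC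
      + ((a:ℂ) * z - z ^ 2) * hCS
      + (Real.sin β:ℂ) ^ 2 * (s ^ 2 - (b:ℂ) ^ 2) * hI
      + (-2 * Complex.I * s * (Real.sin β:ℂ) + (z * (Real.cos β:ℂ)
          + Complex.I * s * (Real.sin β:ℂ) - (a:ℂ) * (Real.cos β:ℂ)
          - Complex.I * (b:ℂ) * (Real.sin β:ℂ))) * hh
  rcases mul_eq_zero.mp key with h1 | h2
  · have hz : z = (a:ℂ) := sub_eq_zero.mp h1
    have him : z.im = 0 := by rw [hz]; simp
    rw [hzim] at him
    nlinarith
  · have hz' : z = ((a * (Real.cos β ^ 2 - Real.sin β ^ 2) : ℝ) : ℂ)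
        + ((2 * b * Real.sin β * Real.cos β : ℝ) : ℂ) * Complex.I := by
      rw [sub_eq_zero.mp h2]
      push_cast
      ring
    have him : z.im = 2 * b * Real.sin β * Real.cos β := by
      rw [hz']
      simp only [Complex.add_im, Complex.ofReal_im, Complex.mul_im, Complex.I_im,
        Complex.I_re, Complex.ofReal_re, mul_zero, mul_one, zero_add, add_zero]
    rw [hzim] at him
    nlinarith [mul_pos hc0 hsin, mul_pos (mul_pos hb0 hsin) hcos]
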